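/- Let P be a left cancellative monoid acting on itself by left multiplication λ_p(q) = pq, viewed as partial bijections P → pP. For a right LCM monoid P, the map [p,q] ↦ λ_p ∘ λ_q^{-1} is an isomorphism from the inverse semigroup S of classes [p,q] together with 0 onto the left inverse hull I_l(P) (the inverse subsemigroup of the symmetric inverse monoid I(P) generated by the λ_p). -/

import Mathlib

/-- The principal right ideal `pP` of a monoid. -/
def rI {M : Type*} [Monoid M] (p : M) : Set M := {x | ∃ y, x = p * y}

/-- A right LCM monoid: left cancellative, and any two principal right ideals are
either disjoint or intersect in another principal right ideal. -/
class RightLCM (M : Type*) extends Monoid M where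
  mul_left_cancel' : ∀ a b c : M, a * b = a * c → b = c
  lcm : ∀ p q : M, rI p ∩ rI q = ∅ ∨ ∃ r : M, rI p ∩ rI q = rI r

namespace RightLCM

variable {M : Type*} [RightLCM M]

/-- The equivalence relation `(p,q) ∼ (pu,qu)` for units `u`. -/
def peq (x y : M × M) : Prop := ∃ u : M, IsUnit u ∧ x.1 = y.1 * u ∧ x.2 = y.2 * u

theorem peq_equivalence : Equivalence (peq (M := M)) := by
  constructor
  · intro x; exact ⟨1, isUnit_one, by simp, by simp⟩
  · rintro x y ⟨u, hu, h1, h2⟩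
    obtain ⟨w, hw⟩ := hu
    subst hw
    exact ⟨↑w⁻¹, Units.isUnit _, by rw [h1, mul_assoc, w.mul_inv, mul_one],
      by rw [h2, mul_assoc, w.mul_inv, mul_one]⟩
  · rintro x y z ⟨u, hu, h1, h2⟩ ⟨v, hv, h3, h4⟩
    exact ⟨v * u, hv.mul hu, by rw [h1, h3, mul_assoc], by rw [h2, h4, mul_assoc]⟩

instance pSetoid : Setoid (M × M) := ⟨peq, peq_equivalence⟩

/-- The inverse semigroup `S = {[p,q] : p,q ∈ P} ∪ {0}` associated to a right LCM monoid. -/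
abbrev S (M : Type*) [RightLCM M] := WithZero (Quotient (pSetoid (M := M)))

/-- The class `[p,q]` as an element of `S M`. -/
def cls (p q : M) : S M := (Quotient.mk (pSetoid (M := M)) (p, q) : Quotient (pSetoid (M := M)))

open scoped Classical in
/-- Product of two representatives: `[a,b][c,d] = [ab', dc']` when `bP ∩ cP = rP` with
`bb' = cc' = r`, and `0` when `bP ∩ cP = ∅`. -/
noncomputable def mulPair (x y : M × M) : S M :=
  if h : rI x.2 ∩ rI y.1 = ∅ then 0
  else
    have hr := (RightLCM.lcm x.2 y.1).resolve_left h
    have hmem : Classical.choose hr ∈ rI x.2 ∩ rI y.1 :=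
      (Set.ext_iff.mp (Classical.choose_spec hr) _).mpr ⟨1, (mul_one _).symm⟩
    cls (x.1 * Classical.choose hmem.1) (y.2 * Classical.choose hmem.2)

/-- The multiplication on `S M` (with `0` absorbing). -/
noncomputable def smul : S M → S M → S M
  | none, _ => 0
  | some _, none => 0
  | some a, some b => mulPair a.out b.out

/-- The involution `[p,q]* = [q,p]` on `S M`. -/
noncomputable def star : S M → S M
  | none => 0
  | some a => cls a.out.2 a.out.1

end RightLCM

namespace RightLCM

variable {M : Type*} [RightLCM M]

open scoped Classical in
/-- The partial bijection `λ_p : P → pP`, `λ_p(q) = pq`, as an element of the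
symmetric inverse monoid of partial bijections of `P`. -/
noncomputable def lamP (p : M) : PartialEquiv M M where
  toFun := fun x => p * x
  invFun := fun x => if h : ∃ y, x = p * y then Classical.choose h else x
  source := Set.univ
  target := rI p
  map_source' := fun x _ => ⟨x, rfl⟩
  map_target' := fun x _ => Set.mem_univ _
  left_inv' := fun x _ => by
    have h : ∃ y, p * x = p * y := ⟨x, rfl⟩
    show (if h : ∃ y, p * x = p * y then Classical.choose h else p * x) = x
    rw [dif_pos h]
    exact RightLCM.mul_left_cancel' p _ x (Classical.choose_spec h).symm
  right_inv' := fun x hx => by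
    have h : ∃ y, x = p * y := hx
    show p * (if h : ∃ y, x = p * y then Classical.choose h else x) = x
    rw [dif_pos h]
    exact (Classical.choose_spec h).symm

/-- The left inverse hull `I_l(P)`: the inverse subsemigroup of the symmetric inverse
monoid generated by the `λ_p`. -/
inductive InvHull : PartialEquiv M M → Prop
  | lam (p : M) : InvHull (lamP p)
  | symm {e : PartialEquiv M M} : InvHull e → InvHull e.symm
  | trans {e f : PartialEquiv M M} : InvHull e → InvHull f → InvHull (e.trans f)

/-- The empty partial bijection. -/
def emptyPE : PartialEquiv M M where
  toFun := id
  invFun := id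
  source := ∅
  target := ∅
  map_source' := fun _ h => h.elim
  map_target' := fun _ h => h.elim
  left_inv' := fun _ h => h.elim
  right_inv' := fun _ h => h.elim

/-- The map `[p,q] ↦ λ_p ∘ λ_q⁻¹` (and `0 ↦` the empty map). -/
noncomputable def phi : S M → PartialEquiv M M
  | none => emptyPE
  | some a => (lamP a.out.2).symm.trans (lamP a.out.1)

end RightLCM

/-!
Multiplicativity is the heart of the matter: `(λ_{p₁}λ_{q₁}⁻¹)(λ_{p₂}λ_{q₂}⁻¹)` is defined at
`q₂w` exactly when `p₂w ∈ q₁P ∩ p₂P`. This intersection is empty, making the product the empty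
map, or equals `rP` with `r = q₁b = p₂c`, and then by left cancellation the domain is `q₂cP`, on
which `q₂cv ↦ p₁bv`: the product is `λ_{p₁b}λ_{q₂c}⁻¹`, matching `[p₁,q₁][p₂,q₂] = [p₁b,q₂c]`.
Injectivity: `λ_pλ_q⁻¹ = λ_{p'}λ_{q'}⁻¹` forces `qP = q'P`, so `q = q'u` for a unit `u`, and
evaluating at `q` gives `p = p'u`. The image contains each `λ_p = λ_pλ_1⁻¹` and is closed under
inverses and products, so it is the whole left inverse hull.
-/

theorem mem_rI {M : Type*} [Monoid M] {p x : M} : x ∈ rI p ↔ p ∣ x := Iff.rfl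

theorem associated_of_dvd_dvd_of_isLeftCancelMul {M : Type*} [Monoid M] [IsLeftCancelMul M]
    {a b : M} (hab : a ∣ b) (hba : b ∣ a) : Associated a b := by
  obtain ⟨c, rfl⟩ := hab
  obtain ⟨d, hd⟩ := hba
  have hcd : c * d = 1 := mul_left_cancel (a := a) (by rw [← mul_assoc, ← hd, mul_one])
  have hdc : d * c = 1 := mul_left_cancel (a := a * c) (by rw [← mul_assoc, ← hd, mul_one])
  exact ⟨⟨c, d, hcd, hdc⟩, rfl⟩

namespace RightLCM

theorem emptyPE_equiv {M : Type*} {e : PartialEquiv M M} (h : e.source = ∅) : emptyPE ≈ e :=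
  ⟨h.symm, fun _ hx => hx.elim⟩

variable {M : Type*} [RightLCM M]

instance : IsLeftCancelMul M := ⟨fun a _ _ => RightLCM.mul_left_cancel' a _ _⟩

theorem lamP_source (p : M) : (lamP p).source = Set.univ := rfl

theorem lamP_apply (p x : M) : lamP p x = p * x := rfl

theorem lamP_symm_apply_mul (p x : M) : (lamP p).symm (p * x) = x :=
  (lamP p).left_inv (Set.mem_univ x)

noncomputable def lamMulInv (p q : M) : PartialEquiv M M := (lamP q).symm.trans (lamP p)

theorem lamMulInv_source (p q : M) : (lamMulInv p q).source = rI q := by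
  simp only [lamMulInv, PartialEquiv.trans_source, PartialEquiv.symm_source, lamP_source,
    Set.preimage_univ, Set.inter_univ]
  rfl

theorem lamMulInv_apply_mul (p q x : M) : lamMulInv p q (q * x) = p * x := by
  rw [lamMulInv, PartialEquiv.coe_trans, Function.comp_apply, lamP_symm_apply_mul, lamP_apply]

theorem lamMulInv_symm (p q : M) : (lamMulInv p q).symm = lamMulInv q p := by
  rw [lamMulInv, lamMulInv, PartialEquiv.trans_symm_eq_symm_trans_symm, PartialEquiv.symm_symm]

theorem lamMulInv_one_right (p : M) : lamMulInv p 1 ≈ lamP p := by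
  refine ⟨?_, fun x _ => ?_⟩
  · rw [lamMulInv_source, lamP_source]
    exact Set.eq_univ_of_forall one_dvd
  · simpa only [one_mul, lamP_apply] using lamMulInv_apply_mul p 1 x

theorem lamMulInv_equiv_of_source_eq {e : PartialEquiv M M} {p q : M} (hs : e.source = rI q)
    (he : ∀ x, e (q * x) = p * x) : lamMulInv p q ≈ e := by
  refine ⟨by rw [lamMulInv_source, hs], fun y hy => ?_⟩
  rw [lamMulInv_source] at hy
  obtain ⟨x, rfl⟩ := hy
  rw [lamMulInv_apply_mul, he]

theorem lamMulInv_congr {x y : M × M} (h : peq x y) :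
    lamMulInv x.1 x.2 ≈ lamMulInv y.1 y.2 := by
  obtain ⟨u, hu, h₁, h₂⟩ := h
  refine lamMulInv_equiv_of_source_eq ?_ fun z => ?_
  · rw [lamMulInv_source]
    ext z
    rw [mem_rI, mem_rI, h₂, hu.mul_right_dvd]
  · rw [h₂, mul_assoc, lamMulInv_apply_mul, h₁, mul_assoc]

theorem peq_of_lamMulInv_equiv {p q p' q' : M} (h : lamMulInv p q ≈ lamMulInv p' q') :
    peq (p, q) (p', q') := by
  have hs : rI q = rI q' := by
    simpa only [lamMulInv_source] using h.source_eq
  obtain ⟨u, hu⟩ : Associated q' q :=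
    associated_of_dvd_dvd_of_isLeftCancelMul ((hs ▸ dvd_refl q : q ∈ rI q'))
      ((hs ▸ dvd_refl q' : q' ∈ rI q))
  refine ⟨u, u.isUnit, ?_, hu.symm⟩
  have hq : q ∈ (lamMulInv p q).source := by rw [lamMulInv_source]; exact dvd_refl q
  have hp : lamMulInv p q q = p := by simpa only [mul_one] using lamMulInv_apply_mul p q 1
  have hp' : lamMulInv p' q' q = p' * u := by rw [← hu, lamMulInv_apply_mul]
  exact hp.symm.trans ((h.eqOn hq).trans hp')

theorem mem_lamMulInv_trans_source {p₁ q₁ p₂ q₂ x : M} :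
    x ∈ ((lamMulInv p₂ q₂).trans (lamMulInv p₁ q₁)).source ↔ ∃ w, x = q₂ * w ∧ q₁ ∣ p₂ * w := by
  rw [PartialEquiv.trans_source, lamMulInv_source]
  constructor
  · rintro ⟨⟨w, rfl⟩, hw⟩
    refine ⟨w, rfl, ?_⟩
    rwa [Set.mem_preimage, lamMulInv_apply_mul, lamMulInv_source] at hw
  · rintro ⟨w, rfl, hw⟩
    exact ⟨dvd_mul_right q₂ w, by rwa [Set.mem_preimage, lamMulInv_apply_mul, lamMulInv_source]⟩

theorem lamMulInv_trans_source_of_disjoint {p₁ q₁ p₂ q₂ : M} (h : rI q₁ ∩ rI p₂ = ∅) :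
    ((lamMulInv p₂ q₂).trans (lamMulInv p₁ q₁)).source = ∅ := by
  refine Set.eq_empty_of_forall_notMem fun x hx => ?_
  obtain ⟨w, -, hw⟩ := mem_lamMulInv_trans_source.1 hx
  have hmem : p₂ * w ∈ rI q₁ ∩ rI p₂ := ⟨hw, dvd_mul_right p₂ w⟩
  rw [h] at hmem
  exact hmem

theorem lamMulInv_trans_of_lcm {p₁ q₁ p₂ q₂ b c : M} (hI : rI q₁ ∩ rI p₂ = rI (q₁ * b))
    (hbc : q₁ * b = p₂ * c) :
    lamMulInv (p₁ * b) (q₂ * c) ≈ (lamMulInv p₂ q₂).trans (lamMulInv p₁ q₁) := by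
  have hdvd : ∀ w, q₁ ∣ p₂ * w ↔ c ∣ w := fun w => by
    rw [← (IsLeftCancelMul.mul_left_cancel p₂).dvd_cancel_left (b := c), ← hbc]
    have hmem := Set.ext_iff.1 hI (p₂ * w)
    exact ⟨fun h => hmem.1 ⟨h, dvd_mul_right p₂ w⟩, fun h => (hmem.2 h).1⟩
  refine lamMulInv_equiv_of_source_eq ?_ fun v => ?_
  · ext x
    rw [mem_lamMulInv_trans_source, mem_rI]
    constructor
    · rintro ⟨w, rfl, hw⟩
      exact mul_dvd_mul_left q₂ ((hdvd w).1 hw)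
    · rintro ⟨v, rfl⟩
      exact ⟨c * v, mul_assoc q₂ c v, (hdvd _).2 (dvd_mul_right c v)⟩
  · rw [PartialEquiv.coe_trans, Function.comp_apply, mul_assoc, lamMulInv_apply_mul, ← mul_assoc,
      ← hbc, mul_assoc, lamMulInv_apply_mul, mul_assoc]

theorem phi_zero_source : (phi (0 : S M)).source = ∅ := rfl

theorem phi_coe (a : Quotient (pSetoid (M := M))) : phi ↑a = lamMulInv a.out.1 a.out.2 := rfl

theorem phi_cls (p q : M) : phi (cls p q) ≈ lamMulInv p q :=
  lamMulInv_congr (Quotient.mk_out (s := pSetoid) (p, q))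

theorem phi_source_eq_empty_iff {s : S M} : (phi s).source = ∅ ↔ s = 0 := by
  refine ⟨fun h => ?_, fun h => h ▸ rfl⟩
  induction s using WithZero.recZeroCoe with
  | zero => rfl
  | coe a =>
    rw [phi_coe, lamMulInv_source] at h
    exact ((Set.eq_empty_iff_forall_notMem.1 h) _ (dvd_refl a.out.2)).elim

theorem phi_injective {s t : S M} (h : phi s ≈ phi t) : s = t := by
  induction s using WithZero.recZeroCoe with
  | zero => exact (phi_source_eq_empty_iff.1 (h.source_eq.symm.trans phi_zero_source)).symm
  | coe a =>
    induction t using WithZero.recZeroCoe with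
    | zero => exact phi_source_eq_empty_iff.1 (h.source_eq.trans phi_zero_source)
    | coe b => exact congrArg _ (Quotient.out_equiv_out.1 (peq_of_lamMulInv_equiv h))

theorem mulPair_eq_zero {x y : M × M} (h : rI x.2 ∩ rI y.1 = ∅) : mulPair x y = 0 := dif_pos h

theorem exists_mulPair_eq_cls {x y : M × M} (h : rI x.2 ∩ rI y.1 ≠ ∅) :
    ∃ b c : M, rI x.2 ∩ rI y.1 = rI (x.2 * b) ∧ x.2 * b = y.1 * c ∧
      mulPair x y = cls (x.1 * b) (y.2 * c) := by
  have hr := (RightLCM.lcm x.2 y.1).resolve_left h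
  have hmem : Classical.choose hr ∈ rI x.2 ∩ rI y.1 :=
    (Set.ext_iff.1 (Classical.choose_spec hr) _).2 (dvd_refl _)
  refine ⟨Classical.choose hmem.1, Classical.choose hmem.2, ?_, ?_, dif_neg h⟩
  · rw [← Classical.choose_spec hmem.1]; exact Classical.choose_spec hr
  · rw [← Classical.choose_spec hmem.1, ← Classical.choose_spec hmem.2]

theorem phi_mulPair (x y : M × M) :
    phi (mulPair x y) ≈ (lamMulInv y.1 y.2).trans (lamMulInv x.1 x.2) := by
  by_cases h : rI x.2 ∩ rI y.1 = ∅
  · rw [mulPair_eq_zero h]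
    exact emptyPE_equiv (lamMulInv_trans_source_of_disjoint h)
  · obtain ⟨b, c, hI, hbc, hxy⟩ := exists_mulPair_eq_cls h
    rw [hxy]
    exact Setoid.trans (phi_cls _ _) (lamMulInv_trans_of_lcm hI hbc)

theorem phi_smul (s t : S M) : phi (smul s t) ≈ (phi t).trans (phi s) := by
  induction s using WithZero.recZeroCoe with
  | zero => exact emptyPE_equiv (by
      rw [PartialEquiv.trans_source, phi_zero_source, Set.preimage_empty, Set.inter_empty])
  | coe a =>
    induction t using WithZero.recZeroCoe with
    | zero =>
      exact emptyPE_equiv (by rw [PartialEquiv.trans_source, phi_zero_source, Set.empty_inter])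
    | coe b => exact phi_mulPair a.out b.out

theorem phi_star (s : S M) : phi (star s) ≈ (phi s).symm := by
  induction s using WithZero.recZeroCoe with
  | zero => exact emptyPE_equiv (M := M) rfl
  | coe a =>
    rw [phi_coe, lamMulInv_symm]
    exact phi_cls _ _

theorem invHull_lamMulInv (p q : M) : InvHull (lamMulInv p q) :=
  (InvHull.lam q).symm.trans (InvHull.lam p)

theorem exists_phi_equiv_of_invHull {e : PartialEquiv M M} (he : InvHull e) :
    ∃ s : S M, phi s ≈ e := by
  induction he with
  | lam p => exact ⟨cls p 1, Setoid.trans (phi_cls p 1) (lamMulInv_one_right p)⟩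
  | symm _ ih =>
    obtain ⟨s, hs⟩ := ih
    exact ⟨star s, Setoid.trans (phi_star s) hs.symm'⟩
  | trans _ _ ih₁ ih₂ =>
    obtain ⟨s, hs⟩ := ih₁
    obtain ⟨t, ht⟩ := ih₂
    exact ⟨smul t s, Setoid.trans (phi_smul t s) (hs.trans' ht)⟩

end RightLCM

open RightLCM in
/-- The map `[p,q] ↦ λ_p λ_q⁻¹` is an isomorphism of the inverse semigroup `S`
onto the left inverse hull of `P` (up to equality of partial maps on their sources):
it is injective, multiplicative (composition being on the largest possible domain),
its nonzero values lie in the left inverse hull, and every element of the left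
inverse hull arises this way. -/
theorem stmt15 {M : Type*} [RightLCM M] :
    (∀ s t : S M, phi s ≈ phi t → s = t) ∧
    (∀ x y : S M, phi (smul x y) ≈ (phi y).trans (phi x)) ∧
    (∀ s : S M, s ≠ 0 → ∃ e : PartialEquiv M M, InvHull e ∧ phi s ≈ e) ∧
    (∀ e : PartialEquiv M M, InvHull e → ∃ s : S M, phi s ≈ e) := by
  refine ⟨fun _ _ => phi_injective, phi_smul, ?_, fun _ => exists_phi_equiv_of_invHull⟩
  intro s hs
  induction s using WithZero.recZeroCoe with
  | zero => exact absurd rfl hs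
  | coe a => exact ⟨_, invHull_lamMulInv _ _, Setoid.refl _⟩
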